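/- In any unit mixed interval representation of a twin-free graph containing an induced K_{1,4}* (a claw K_{1,3} on center x and leaves u, v, x1, together with a vertex x1' adjacent exactly to x and x1), the intervals of x1 and x1' have the same endpoints, with one closed and one open at the endpoint away from x. -/
import Mathlib


variable {V : Type*}

/-- `s` is a length-1 real interval with endpoints `x` and `x+1`, each open or
closed. -/
def UnitIntervalAt (s : Set ℝ) (x : ℝ) : Prop :=
  s = Set.Icc x (x + 1) ∨ s = Set.Ico x (x + 1) ∨
    s = Set.Ioc x (x + 1) ∨ s = Set.Ioo x (x + 1)

/-- A unit mixed interval representation of `G`. -/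
def UnitMixedRep (G : SimpleGraph V) (I : V → Set ℝ) : Prop :=
  (∀ v, ∃ x : ℝ, UnitIntervalAt (I v) x) ∧
    ∀ u v : V, u ≠ v → (G.Adj u v ↔ (I u ∩ I v).Nonempty)

/-- `G` is twin-free: no two distinct vertices have the same closed
neighborhood. -/
def TwinFree (G : SimpleGraph V) : Prop :=
  ∀ u v : V, (∀ w, (G.Adj u w ∨ w = u) ↔ (G.Adj v w ∨ w = v)) → u = v

lemma uia_subset_Icc {s : Set ℝ} {x : ℝ} (h : UnitIntervalAt s x) :
    s ⊆ Set.Icc x (x + 1) := by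
  rcases h with rfl | rfl | rfl | rfl
  · exact subset_rfl
  · exact Set.Ico_subset_Icc_self
  · exact Set.Ioc_subset_Icc_self
  · exact Set.Ioo_subset_Icc_self

lemma uia_Ioo_subset {s : Set ℝ} {x : ℝ} (h : UnitIntervalAt s x) :
    Set.Ioo x (x + 1) ⊆ s := by
  rcases h with rfl | rfl | rfl | rfl
  · exact Set.Ioo_subset_Icc_self
  · exact Set.Ioo_subset_Ico_self
  · exact Set.Ioo_subset_Ioc_self
  · exact subset_rfl

lemma uia_overlap {s t : Set ℝ} {x y : ℝ} (hs : UnitIntervalAt s x)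
    (ht : UnitIntervalAt t y) (h : (s ∩ t).Nonempty) :
    x ≤ y + 1 ∧ y ≤ x + 1 := by
  obtain ⟨z, hzs, hzt⟩ := h
  obtain ⟨h1, h2⟩ := uia_subset_Icc hs hzs
  obtain ⟨h3, h4⟩ := uia_subset_Icc ht hzt
  constructor <;> linarith

lemma uia_gap {s t : Set ℝ} {x y : ℝ} (hs : UnitIntervalAt s x)
    (ht : UnitIntervalAt t y) (h : ¬(s ∩ t).Nonempty) :
    x + 1 ≤ y ∨ y + 1 ≤ x := by
  by_contra hc
  push_neg at hc
  obtain ⟨hc1, hc2⟩ := hc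
  apply h
  refine ⟨(max x y + min (x + 1) (y + 1)) / 2,
    uia_Ioo_subset hs ⟨?_, ?_⟩, uia_Ioo_subset ht ⟨?_, ?_⟩⟩ <;>
  · have h1 := le_max_left x y
    have h2 := le_max_right x y
    have h3 := min_le_left (x + 1) (y + 1)
    have h4 := min_le_right (x + 1) (y + 1)
    have hm : max x y < min (x + 1) (y + 1) := by
      apply max_lt <;> apply lt_min <;> linarith
    linarith

lemma uia_touch {s t : Set ℝ} {x : ℝ} (hs : UnitIntervalAt s x)
    (ht : UnitIntervalAt t (x + 1)) (h : (s ∩ t).Nonempty) :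
    (x + 1) ∈ s ∧ (x + 1) ∈ t := by
  obtain ⟨z, hzs, hzt⟩ := h
  obtain ⟨h1, h2⟩ := uia_subset_Icc hs hzs
  obtain ⟨h3, h4⟩ := uia_subset_Icc ht hzt
  have : z = x + 1 := le_antisymm h2 h3
  rw [this] at hzs hzt
  exact ⟨hzs, hzt⟩

lemma uia_ext {s t : Set ℝ} {c : ℝ} (hs : UnitIntervalAt s c)
    (ht : UnitIntervalAt t c) (h0 : c ∈ s ↔ c ∈ t)
    (h1 : c + 1 ∈ s ↔ c + 1 ∈ t) : s = t := by
  have hlt : c < c + 1 := by linarith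
  rcases hs with rfl | rfl | rfl | rfl <;> rcases ht with rfl | rfl | rfl | rfl <;>
    simp_all [Set.mem_Icc, Set.mem_Ico, Set.mem_Ioc, Set.mem_Ioo, le_refl, lt_irrefl]

lemma uia_diff_right {s t : Set ℝ} {c : ℝ} (hs : UnitIntervalAt s c)
    (ht : UnitIntervalAt t c) (hne : s ≠ t) (h0 : c ∈ s ↔ c ∈ t) :
    (c + 1 ∈ s ↔ c + 1 ∉ t) := by
  by_cases h : c + 1 ∈ s <;> by_cases h' : c + 1 ∈ t
  · exact absurd (uia_ext hs ht h0 (iff_of_true h h')) hne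
  · tauto
  · tauto
  · exact absurd (uia_ext hs ht h0 (iff_of_false h h')) hne

lemma uia_diff_left {s t : Set ℝ} {c : ℝ} (hs : UnitIntervalAt s c)
    (ht : UnitIntervalAt t c) (hne : s ≠ t) (h1 : c + 1 ∈ s ↔ c + 1 ∈ t) :
    (c ∈ s ↔ c ∉ t) := by
  by_cases h : c ∈ s <;> by_cases h' : c ∈ t
  · exact absurd (uia_ext hs ht (iff_of_true h h') h1) hne
  · tauto
  · tauto
  · exact absurd (uia_ext hs ht (iff_of_false h h') h1) hne

/-- Finisher for the case where `I x1, I x1'` sit at `a x + 1`. -/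
lemma uia_right_case {sx s1 s1' : Set ℝ} {A b : ℝ}
    (hx : UnitIntervalAt sx A) (h1 : UnitIntervalAt s1 b)
    (h1' : UnitIntervalAt s1' b) (hb : b = A + 1)
    (hn1 : (sx ∩ s1).Nonempty) (hn1' : (sx ∩ s1').Nonempty)
    (hne : s1 ≠ s1') :
    b + 1 ∉ Set.Icc A (A + 1) ∧ (b + 1 ∈ s1 ↔ b + 1 ∉ s1') := by
  subst hb
  have t1 := uia_touch hx h1 hn1
  have t1' := uia_touch hx h1' hn1'
  refine ⟨?_, uia_diff_right h1 h1' hne (iff_of_true t1.2 t1'.2)⟩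
  intro hm
  rw [Set.mem_Icc] at hm
  linarith [hm.2]

/-- Finisher for the case where `I x1, I x1'` sit at `a x - 1`. -/
lemma uia_left_case {sx s1 s1' : Set ℝ} {A b : ℝ}
    (hx : UnitIntervalAt sx A) (h1 : UnitIntervalAt s1 b)
    (h1' : UnitIntervalAt s1' b) (hb : b = A - 1)
    (hn1 : (sx ∩ s1).Nonempty) (hn1' : (sx ∩ s1').Nonempty)
    (hne : s1 ≠ s1') :
    b ∉ Set.Icc A (A + 1) ∧ (b ∈ s1 ↔ b ∉ s1') := by
  subst hb
  have hx' : UnitIntervalAt sx (A - 1 + 1) := by rw [sub_add_cancel]; exact hx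
  have hn1c : (s1 ∩ sx).Nonempty := by rw [Set.inter_comm]; exact hn1
  have hn1c' : (s1' ∩ sx).Nonempty := by rw [Set.inter_comm]; exact hn1'
  have t1 := uia_touch h1 hx' hn1c
  have t1' := uia_touch h1' hx' hn1c'
  refine ⟨?_, uia_diff_left h1 h1' hne (iff_of_true t1.1 t1'.1)⟩
  intro hm
  rw [Set.mem_Icc] at hm
  linarith [hm.1]

/-- Finisher for the middle case: `I x1 = I x1'`. -/
lemma uia_mid_case {sx su sv s1 s1' : Set ℝ} {A : ℝ}
    (hx : UnitIntervalAt sx A) (hu : UnitIntervalAt su (A - 1))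
    (hv : UnitIntervalAt sv (A + 1)) (h1 : UnitIntervalAt s1 A)
    (h1' : UnitIntervalAt s1' A)
    (hnxu : (sx ∩ su).Nonempty) (hnxv : (sx ∩ sv).Nonempty)
    (gu1 : ¬(su ∩ s1).Nonempty) (gu1' : ¬(su ∩ s1').Nonempty)
    (gv1 : ¬(sv ∩ s1).Nonempty) (gv1' : ¬(sv ∩ s1').Nonempty) :
    s1 = s1' := by
  have hx' : UnitIntervalAt sx (A - 1 + 1) := by rw [sub_add_cancel]; exact hx
  have hnxuc : (su ∩ sx).Nonempty := by rw [Set.inter_comm]; exact hnxu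
  have tu := uia_touch hu hx' hnxuc
  have hAu : A ∈ su := by have := tu.1; rwa [sub_add_cancel] at this
  have tv := uia_touch hx hv hnxv
  have m1 : A ∉ s1 := fun hm => gu1 ⟨A, hAu, hm⟩
  have m1' : A ∉ s1' := fun hm => gu1' ⟨A, hAu, hm⟩
  have m2 : A + 1 ∉ s1 := fun hm => gv1 ⟨A + 1, tv.2, hm⟩
  have m2' : A + 1 ∉ s1' := fun hm => gv1' ⟨A + 1, tv.2, hm⟩
  exact uia_ext h1 h1' (iff_of_false m1 m1') (iff_of_false m2 m2')

/-- In any unit mixed interval representation of a twin-free graph containing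
an induced `K_{1,4}*` (center `x` adjacent to `u, v, x1, x1'`; `x1` adjacent
to `x1'`; no other edges), the intervals of `x1` and `x1'` have the same
endpoints, and at the shared endpoint `p` away from `I(x)` one of the two
intervals is closed and the other open. -/
theorem K14star_forces_twin_endpoints
    (G : SimpleGraph V) (htf : TwinFree G)
    (a : V → ℝ) (I : V → Set ℝ)
    (hunit : ∀ w, UnitIntervalAt (I w) (a w))
    (hadj : ∀ w w' : V, w ≠ w' → (G.Adj w w' ↔ (I w ∩ I w').Nonempty))
    (x u v x1 x1' : V)
    (hdist : List.Pairwise (· ≠ ·) [x, u, v, x1, x1'])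
    (e1 : G.Adj x u) (e2 : G.Adj x v) (e3 : G.Adj x x1) (e4 : G.Adj x x1')
    (e5 : G.Adj x1 x1')
    (n1 : ¬G.Adj u v) (n2 : ¬G.Adj u x1) (n3 : ¬G.Adj u x1')
    (n4 : ¬G.Adj v x1) (n5 : ¬G.Adj v x1') :
    a x1 = a x1' ∧
      ∃ p : ℝ, (p = a x1 ∨ p = a x1 + 1) ∧
        p ∉ Set.Icc (a x) (a x + 1) ∧
        (p ∈ I x1 ↔ p ∉ I x1') := by
  simp [List.pairwise_cons] at hdist
  obtain ⟨⟨dxu, dxv, dx1, dx1'⟩, ⟨duv, du1, du1'⟩, ⟨dv1, dv1'⟩, d11⟩ := hdist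
  -- interval overlap / gap facts
  have nxu : (I x ∩ I u).Nonempty := (hadj x u dxu).1 e1
  have nxv : (I x ∩ I v).Nonempty := (hadj x v dxv).1 e2
  have nx1 : (I x ∩ I x1).Nonempty := (hadj x x1 dx1).1 e3
  have nx1' : (I x ∩ I x1').Nonempty := (hadj x x1' dx1').1 e4
  have n11 : (I x1 ∩ I x1').Nonempty := (hadj x1 x1' d11).1 e5
  have guv : ¬(I u ∩ I v).Nonempty := fun hn => n1 ((hadj u v duv).2 hn)
  have gu1 : ¬(I u ∩ I x1).Nonempty := fun hn => n2 ((hadj u x1 du1).2 hn)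
  have gu1' : ¬(I u ∩ I x1').Nonempty := fun hn => n3 ((hadj u x1' du1').2 hn)
  have gv1 : ¬(I v ∩ I x1).Nonempty := fun hn => n4 ((hadj v x1 dv1).2 hn)
  have gv1' : ¬(I v ∩ I x1').Nonempty := fun hn => n5 ((hadj v x1' dv1').2 hn)
  obtain ⟨oxu1, oxu2⟩ := uia_overlap (hunit x) (hunit u) nxu
  obtain ⟨oxv1, oxv2⟩ := uia_overlap (hunit x) (hunit v) nxv
  obtain ⟨ox11, ox12⟩ := uia_overlap (hunit x) (hunit x1) nx1
  obtain ⟨ox11', ox12'⟩ := uia_overlap (hunit x) (hunit x1') nx1'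
  obtain ⟨o111, o112⟩ := uia_overlap (hunit x1) (hunit x1') n11
  have Guv := uia_gap (hunit u) (hunit v) guv
  have Gu1 := uia_gap (hunit u) (hunit x1) gu1
  have Gu1' := uia_gap (hunit u) (hunit x1') gu1'
  have Gv1 := uia_gap (hunit v) (hunit x1) gv1
  have Gv1' := uia_gap (hunit v) (hunit x1') gv1'
  -- x1 and x1' are not interval-twins
  have hne : I x1 ≠ I x1' := by
    intro hII
    apply d11
    apply htf x1 x1'
    intro w
    by_cases hw1 : w = x1
    · subst hw1
      simp [e5.symm]
    · by_cases hw2 : w = x1'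
      · subst hw2
        simp [e5]
      · have h1 := hadj x1 w (fun h => hw1 h.symm)
        have h2 := hadj x1' w (fun h => hw2 h.symm)
        rw [hII] at h1
        simp [hw1, hw2, h1, h2]
  -- equal left endpoints
  have heq : a x1 = a x1' := by
    rcases Guv with g | g <;> rcases Gu1 with g1 | g1 <;>
      rcases Gu1' with g2 | g2 <;> rcases Gv1 with g3 | g3 <;>
      rcases Gv1' with g4 | g4 <;> linarith
  refine ⟨heq, ?_⟩
  have h1'u : UnitIntervalAt (I x1') (a x1) := by rw [heq]; exact hunit x1'
  rcases Guv with g | g <;> rcases Gu1 with g1 | g1 <;> rcases Gv1 with g3 | g3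
  -- g : a u + 1 ≤ a v
  · -- right case : a x1 = a x + 1
    have hb : a x1 = a x + 1 := by linarith
    obtain ⟨hp1, hp2⟩ := uia_right_case (hunit x) (hunit x1) h1'u hb nx1 nx1' hne
    exact ⟨a x1 + 1, Or.inr rfl, hp1, hp2⟩
  · -- middle case, u left, v right
    have hu : a u = a x - 1 := by linarith
    have hv : a v = a x + 1 := by linarith
    have hb : a x1 = a x := by linarith
    have h1A : UnitIntervalAt (I x1) (a x) := by rw [← hb]; exact hunit x1
    have h1A' : UnitIntervalAt (I x1') (a x) := by rw [← hb]; exact h1'u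
    have huA : UnitIntervalAt (I u) (a x - 1) := by rw [← hu]; exact hunit u
    have hvA : UnitIntervalAt (I v) (a x + 1) := by rw [← hv]; exact hunit v
    exact absurd (uia_mid_case (hunit x) huA hvA h1A h1A' nxu nxv gu1 gu1' gv1 gv1') hne
  · exfalso; linarith
  · -- left case : a x1 = a x - 1
    have hb : a x1 = a x - 1 := by linarith
    obtain ⟨hp1, hp2⟩ := uia_left_case (hunit x) (hunit x1) h1'u hb nx1 nx1' hne
    exact ⟨a x1, Or.inl rfl, hp1, hp2⟩
  -- g : a v + 1 ≤ a u
  · -- right case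
    have hb : a x1 = a x + 1 := by linarith
    obtain ⟨hp1, hp2⟩ := uia_right_case (hunit x) (hunit x1) h1'u hb nx1 nx1' hne
    exact ⟨a x1 + 1, Or.inr rfl, hp1, hp2⟩
  · exfalso; linarith
  · -- middle case, v left, u right
    have hu : a v = a x - 1 := by linarith
    have hv : a u = a x + 1 := by linarith
    have hb : a x1 = a x := by linarith
    have h1A : UnitIntervalAt (I x1) (a x) := by rw [← hb]; exact hunit x1
    have h1A' : UnitIntervalAt (I x1') (a x) := by rw [← hb]; exact h1'u
    have hvA : UnitIntervalAt (I v) (a x - 1) := by rw [← hu]; exact hunit v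
    have huA : UnitIntervalAt (I u) (a x + 1) := by rw [← hv]; exact hunit u
    exact absurd (uia_mid_case (hunit x) hvA huA h1A h1A' nxv nxu gv1 gv1' gu1 gu1') hne
  · -- left case
    have hb : a x1 = a x - 1 := by linarith
    obtain ⟨hp1, hp2⟩ := uia_left_case (hunit x) (hunit x1) h1'u hb nx1 nx1' hne
    exact ⟨a x1, Or.inl rfl, hp1, hp2⟩
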